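/- Let p ≥ 1, ρ > 0 and B ≥ 0. Then there exists a finite constant M* (depending only on p, ρ and B) such that for every symmetric positive semidefinite matrix S ∈ ℝ^{p×p} with λ₁(S) ≤ B and every symmetric positive definite p×p matrix Θ̂ maximizing the GLASSO objective Q_S(Θ) = log det Θ − tr(SΘ) − ρ ∑_{j,k=1}^p |Θ_{jk}| over all symmetric positive definite p×p matrices, one has λ₁(Θ̂) ≤ M*. -/

import Mathlib

/-!
Let `E = ∑ⱼₖ |Θ̂ⱼₖ|`; every eigenvalue of `Θ̂` is at most `E`. Since `tr(SΘ̂) ≥ 0` and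
`log λ ≤ cλ - 1 - log c` for every eigenvalue `λ` of `Θ̂`, taking `c = ρ/2` gives
`Q_S(Θ̂) ≤ -(ρ/2) E - p (1 + log (ρ/2))`, while `Q_S(I) = -tr S - ρp ≥ -pB - ρp`.
Optimality of `Θ̂` against the identity therefore bounds `E`.
-/

open Matrix

/-- The largest eigenvalue of a real matrix (as the supremum of its set of eigenvalues). -/
noncomputable def maxEig {p : ℕ} (A : Matrix (Fin p) (Fin p) ℝ) : ℝ :=
  sSup {μ : ℝ | ∃ v : Fin p → ℝ, v ≠ 0 ∧ A.mulVec v = μ • v}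

/-- The GLASSO objective `Q_S(Θ) = log det Θ − tr(SΘ) − ρ ∑_{j,k} |Θ_{jk}|`. -/
noncomputable def glassoObj {p : ℕ} (ρ : ℝ) (S Θ : Matrix (Fin p) (Fin p) ℝ) : ℝ :=
  Real.log Θ.det - (S * Θ).trace - ρ * ∑ j, ∑ k, |Θ j k|

namespace Matrix

variable {n : Type*} [Fintype n]

theorem le_sum_abs_of_mulVec_eq_smul {A : Matrix n n ℝ} {μ : ℝ} {v : n → ℝ} (hv : v ≠ 0)
    (he : A *ᵥ v = μ • v) : μ ≤ ∑ j, ∑ k, |A j k| := by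
  set N : ℝ := ∑ i, v i * v i
  have hN : 0 < N := by
    obtain ⟨i, hi⟩ := Function.ne_iff.mp hv
    exact Finset.sum_pos' (fun i _ => mul_self_nonneg _)
      ⟨i, Finset.mem_univ i, mul_self_pos.mpr hi⟩
  have hsq (i : n) : v i * v i ≤ N :=
    Finset.single_le_sum (f := fun i => v i * v i) (fun i _ => mul_self_nonneg _)
      (Finset.mem_univ i)
  -- `2 |v j| |v k| ≤ v j ^ 2 + v k ^ 2 ≤ 2 N`
  have hprod (j k : n) : |v j| * |v k| ≤ N := by
    nlinarith [hsq j, hsq k, sq_nonneg (|v j| - |v k|), sq_abs (v j), sq_abs (v k)]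
  have hterm (j k : n) : v j * (A j k * v k) ≤ |A j k| * N :=
    calc v j * (A j k * v k) ≤ |v j * (A j k * v k)| := le_abs_self _
      _ = |A j k| * (|v j| * |v k|) := by rw [abs_mul, abs_mul]; ring
      _ ≤ |A j k| * N := mul_le_mul_of_nonneg_left (hprod j k) (abs_nonneg _)
  refine le_of_mul_le_mul_right ?_ hN
  calc μ * N = v ⬝ᵥ (A *ᵥ v) := by
        simp only [he, dotProduct, Pi.smul_apply, smul_eq_mul, N, Finset.mul_sum]
        congr 1; ext i; ring
    _ = ∑ j, ∑ k, v j * (A j k * v k) := by simp [dotProduct, mulVec, Finset.mul_sum]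
    _ ≤ ∑ j, ∑ k, |A j k| * N := Finset.sum_le_sum fun j _ => Finset.sum_le_sum fun k _ => hterm j k
    _ = (∑ j, ∑ k, |A j k|) * N := by simp only [Finset.sum_mul]

theorem trace_le_sum_abs (A : Matrix n n ℝ) : A.trace ≤ ∑ j, ∑ k, |A j k| :=
  calc A.trace ≤ ∑ j, |A j j| := Finset.sum_le_sum fun _ _ => le_abs_self _
    _ ≤ ∑ j, ∑ k, |A j k| := Finset.sum_le_sum fun j _ =>
        Finset.single_le_sum (f := fun k => |A j k|) (fun _ _ => abs_nonneg _) (Finset.mem_univ j)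

theorem PosSemidef.trace_mul_nonneg {S T : Matrix n n ℝ} (hS : S.PosSemidef) (hT : T.PosSemidef) :
    0 ≤ (S * T).trace := by
  classical
  obtain ⟨C, rfl⟩ : ∃ C : Matrix n n ℝ, T = Cᴴ * C := by
    open scoped MatrixOrder in exact CStarAlgebra.nonneg_iff_eq_star_mul_self.mp hT.nonneg
  rw [← mul_assoc, trace_mul_cycle]
  exact (hS.mul_mul_conjTranspose_same C).trace_nonneg

/-- Summing `log λ ≤ c λ - 1 - log c` over the eigenvalues `λ` of `A`. -/
theorem PosDef.log_det_le [DecidableEq n] {A : Matrix n n ℝ} (hA : A.PosDef) {c : ℝ} (hc : 0 < c) :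
    Real.log A.det ≤ c * A.trace - Fintype.card n * (1 + Real.log c) := by
  have hpos := hA.eigenvalues_pos
  have hlog (i : n) : Real.log (hA.1.eigenvalues i) ≤ c * hA.1.eigenvalues i - (1 + Real.log c) := by
    have := Real.log_le_sub_one_of_pos (mul_pos hc (hpos i))
    rw [Real.log_mul hc.ne' (hpos i).ne'] at this
    linarith
  rw [hA.1.det_eq_prod_eigenvalues, hA.1.trace_eq_sum_eigenvalues]
  simp only [RCLike.ofReal_real_eq_id, id_eq]
  rw [Real.log_prod fun i _ => (hpos i).ne', Finset.mul_sum]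
  calc ∑ i, Real.log (hA.1.eigenvalues i) ≤ ∑ i, (c * hA.1.eigenvalues i - (1 + Real.log c)) :=
        Finset.sum_le_sum fun i _ => hlog i
    _ = _ := by
      simp only [Finset.sum_sub_distrib, Finset.sum_const, Finset.card_univ, nsmul_eq_mul]

end Matrix

theorem eigenvalue_le_maxEig {p : ℕ} {A : Matrix (Fin p) (Fin p) ℝ} (hA : A.IsHermitian)
    (i : Fin p) : hA.eigenvalues i ≤ maxEig A :=
  le_csSup ⟨_, fun _ ⟨_, hv, he⟩ => le_sum_abs_of_mulVec_eq_smul hv he⟩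
    ⟨_, (WithLp.ofLp_eq_zero 2).ne.2 <| hA.eigenvectorBasis.orthonormal.ne_zero i,
      hA.mulVec_eigenvectorBasis i⟩

theorem maxEig_le_sum_abs {p : ℕ} (A : Matrix (Fin p) (Fin p) ℝ) :
    maxEig A ≤ ∑ j, ∑ k, |A j k| :=
  Real.sSup_le (fun _ ⟨_, hv, he⟩ => le_sum_abs_of_mulVec_eq_smul hv he)
    (Finset.sum_nonneg fun _ _ => Finset.sum_nonneg fun _ _ => abs_nonneg _)

theorem trace_le_mul_maxEig {p : ℕ} {A : Matrix (Fin p) (Fin p) ℝ} (hA : A.IsHermitian) :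
    A.trace ≤ p * maxEig A := by
  rw [hA.trace_eq_sum_eigenvalues]
  simpa using Finset.sum_le_sum fun i (_ : i ∈ Finset.univ) => eigenvalue_le_maxEig hA i

theorem glassoObj_one {p : ℕ} (ρ : ℝ) (S : Matrix (Fin p) (Fin p) ℝ) :
    glassoObj ρ S 1 = -S.trace - ρ * p := by
  simp [glassoObj, Matrix.one_apply, apply_ite abs]

theorem glassoObj_le {p : ℕ} (ρ : ℝ) {S Θ : Matrix (Fin p) (Fin p) ℝ} (hS : S.PosSemidef)
    (hΘ : Θ.PosDef) {c : ℝ} (hc : 0 < c) :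
    glassoObj ρ S Θ ≤ (c - ρ) * ∑ j, ∑ k, |Θ j k| - p * (1 + Real.log c) := by
  have := hΘ.log_det_le hc
  have := mul_le_mul_of_nonneg_left (trace_le_sum_abs Θ) hc.le
  have := hS.trace_mul_nonneg hΘ.posSemidef
  simp only [glassoObj, Fintype.card_fin] at *
  linarith

theorem glasso_maximizer_largest_eigenvalue_bounded_general
    (p : ℕ) (ρ : ℝ) (hρ : 0 < ρ) (B : ℝ) :
    ∃ Mstar : ℝ, ∀ S : Matrix (Fin p) (Fin p) ℝ, S.PosSemidef → maxEig S ≤ B →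
      ∀ Θhat : Matrix (Fin p) (Fin p) ℝ, Θhat.PosDef →
        (∀ Θ : Matrix (Fin p) (Fin p) ℝ, Θ.PosDef →
          glassoObj ρ S Θ ≤ glassoObj ρ S Θhat) →
        maxEig Θhat ≤ Mstar := by
  refine ⟨2 * p * (B + ρ - 1 - Real.log (ρ / 2)) / ρ, ?_⟩
  intro S hS hSB Θhat hΘhat hopt
  have hp : (0 : ℝ) ≤ p := p.cast_nonneg
  have hone : -(p * B) - ρ * p ≤ glassoObj ρ S 1 := by
    rw [glassoObj_one]
    linarith [trace_le_mul_maxEig hS.1, mul_le_mul_of_nonneg_left hSB hp]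
  have hE : ρ / 2 * ∑ j, ∑ k, |Θhat j k| ≤ p * (B + ρ - 1 - Real.log (ρ / 2)) := by
    linarith [hopt 1 PosDef.one, glassoObj_le ρ hS hΘhat (half_pos hρ)]
  calc maxEig Θhat ≤ ∑ j, ∑ k, |Θhat j k| := maxEig_le_sum_abs Θhat
    _ ≤ 2 * p * (B + ρ - 1 - Real.log (ρ / 2)) / ρ := by
      rw [le_div_iff₀ hρ]
      linarith

theorem glasso_maximizer_largest_eigenvalue_bounded
    (p : ℕ) (hp : 1 ≤ p) (ρ : ℝ) (hρ : 0 < ρ) (B : ℝ) (hB : 0 ≤ B) :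
    ∃ Mstar : ℝ, ∀ S : Matrix (Fin p) (Fin p) ℝ, S.PosSemidef → maxEig S ≤ B →
      ∀ Θhat : Matrix (Fin p) (Fin p) ℝ, Θhat.PosDef →
        (∀ Θ : Matrix (Fin p) (Fin p) ℝ, Θ.PosDef →
          glassoObj ρ S Θ ≤ glassoObj ρ S Θhat) →
        maxEig Θhat ≤ Mstar :=
  glasso_maximizer_largest_eigenvalue_bounded_general p ρ hρ B
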